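/- arXiv:2505.24010 — 8 statements merged into one kernel-verified Lean document; each statement's English description precedes it below -/
import Mathlib

section
/- For finite-support probability distributions p on a set X and q on a set Y, and maps f : X → Z, g : Y → Z with D(f)(p) = D(g)(q) (where D(f)(p)(z) = Σ_{x ∈ f⁻¹(z)} p(x)), define m(p,q)(x,y) = p(x)·q(y) / D(f)(p)(f(x)) for (x,y) in the pullback X ×_Z Y (interpreting 0/0 as 0). Then m(p,q) is a probability distribution on X ×_Z Y, and pushing it forward along the two projections recovers p and q respectively. -/
open scoped BigOperators

/-- The pushforward of a real-valued weight function along a map: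
`D(f)(p)(y) = ∑_{x ∈ f⁻¹(y)} p(x)`. -/
noncomputable def pushforward {X Y : Type} (f : X → Y) (p : X → ℝ) : Y → ℝ :=
  fun y => ∑ᶠ x ∈ f ⁻¹' {y}, p x

/-- A finite-support probability distribution: nonnegative, finitely supported, total mass 1. -/
def IsDist {X : Type} (p : X → ℝ) : Prop :=
  (∀ x, 0 ≤ p x) ∧ (Function.support p).Finite ∧ ∑ᶠ x, p x = 1

/-- The gluing of two weight functions over the pullback `X ×_Z Y`:
`m(p,q)(x,y) = p(x)·q(y) / D(f)(p)(f(x))` (with `0/0 = 0`, as in real division). -/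
noncomputable def glue {X Y Z : Type} (f : X → Z) (g : Y → Z)
    (p : X → ℝ) (q : Y → ℝ) : {w : X × Y // f w.1 = g w.2} → ℝ :=
  fun w => p w.1.1 * q w.1.2 / pushforward f p (f w.1.1)

open Function Set

theorem pushforward_eq_sum {X Z : Type} [DecidableEq Z] (f : X → Z) (p : X → ℝ)
    (hp : (Function.support p).Finite) (z : Z) :
    pushforward f p z = ∑ x ∈ hp.toFinset.filter (fun x => f x = z), p x := by
  apply finsum_mem_eq_sum_of_inter_support_eq
  ext x
  simp only [Set.mem_inter_iff, Set.mem_preimage, Set.mem_singleton_iff, Finset.coe_filter,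
    Set.mem_setOf_eq, Set.Finite.mem_toFinset, Function.mem_support]
  tauto

theorem pushforward_nonneg {X Z : Type} (f : X → Z) (p : X → ℝ)
    (hp : (Function.support p).Finite) (h0 : ∀ x, 0 ≤ p x) (z : Z) :
    0 ≤ pushforward f p z := by
  classical
  rw [pushforward_eq_sum f p hp z]
  exact Finset.sum_nonneg fun x _ => h0 x

theorem pushforward_eq_zero {X Z : Type} (f : X → Z) (p : X → ℝ)
    (hp : (Function.support p).Finite) (h0 : ∀ x, 0 ≤ p x) {x : X}
    (hz : pushforward f p (f x) = 0) : p x = 0 := by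
  classical
  by_contra hx
  rw [pushforward_eq_sum f p hp (f x)] at hz
  have hmem : x ∈ hp.toFinset.filter (fun a => f a = f x) := by
    simp [hp.mem_toFinset, hx]
  have := (Finset.sum_eq_zero_iff_of_nonneg (fun a _ => h0 a)).mp hz x hmem
  exact hx this

theorem finsum_fiberwise' {A B : Type} (h : A → B) (φ : A → ℝ)
    (hφ : (Function.support φ).Finite) :
    ∑ᶠ b, pushforward h φ b = ∑ᶠ a, φ a := by
  classical
  have hsub : Function.support (pushforward h φ) ⊆ ↑(hφ.toFinset.image h) := by
    intro b hb
    rw [Function.mem_support, pushforward_eq_sum h φ hφ b] at hb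
    obtain ⟨a, ha, -⟩ := Finset.exists_ne_zero_of_sum_ne_zero hb
    simp only [Finset.mem_filter] at ha
    simp only [Finset.coe_image, Set.mem_image, Finset.mem_coe]
    exact ⟨a, ha.1, ha.2⟩
  rw [finsum_eq_sum_of_support_subset _ hsub, finsum_eq_sum φ hφ]
  simp_rw [pushforward_eq_sum h φ hφ]
  exact Finset.sum_fiberwise_of_maps_to (fun a ha => Finset.mem_image_of_mem h ha) φ

/-- if `p`, `q` are finite-support probability distributions with equal
pushforwards to `Z`, then `m(p,q)` is a probability distribution on the pullback
`X ×_Z Y`, and its pushforwards along the two projections are `p` and `q`. -/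
theorem glue_isDist_and_marginals {X Y Z : Type} (f : X → Z) (g : Y → Z)
    (p : X → ℝ) (q : Y → ℝ) (hp : IsDist p) (hq : IsDist q)
    (h : pushforward f p = pushforward g q) :
    IsDist (glue f g p q) ∧
    pushforward (fun w : {w : X × Y // f w.1 = g w.2} => w.1.1) (glue f g p q) = p ∧
    pushforward (fun w : {w : X × Y // f w.1 = g w.2} => w.1.2) (glue f g p q) = q := by
  classical
  obtain ⟨hp0, hpS, hp1⟩ := hp
  obtain ⟨hq0, hqS, hq1⟩ := hq
  -- nonnegativity of glue
  have hg0 : ∀ w, 0 ≤ glue f g p q w := fun w =>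
    div_nonneg (mul_nonneg (hp0 _) (hq0 _)) (pushforward_nonneg f p hpS hp0 _)
  -- finiteness of the support of glue
  have hGfin : (Function.support (glue f g p q)).Finite := by
    have hsub : Function.support (glue f g p q) ⊆
        (fun w : {w : X × Y // f w.1 = g w.2} => (w : X × Y)) ⁻¹'
          ((Function.support p) ×ˢ (Function.support q)) := by
      intro w hw
      simp only [Function.mem_support, glue, div_ne_zero_iff, mul_ne_zero_iff] at hw
      exact ⟨hw.1.1, hw.1.2⟩
    exact (Set.Finite.preimage Subtype.val_injective.injOn (hpS.prod hqS)).subset hsub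
  -- first marginal
  have hm1 : pushforward (fun w : {w : X × Y // f w.1 = g w.2} => w.1.1) (glue f g p q) = p := by
    funext x₀
    have hbij : pushforward (fun w : {w : X × Y // f w.1 = g w.2} => w.1.1) (glue f g p q) x₀
        = ∑ᶠ y ∈ g ⁻¹' {f x₀}, p x₀ * q y / pushforward f p (f x₀) := by
      apply finsum_mem_eq_of_bijOn (fun w => w.1.2)
      · refine ⟨?_, ?_, ?_⟩
        · intro w hw
          simp only [Set.mem_preimage, Set.mem_singleton_iff] at hw ⊢
          rw [← w.2, hw]
        · intro w hw w' hw' he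
          simp only [Set.mem_preimage, Set.mem_singleton_iff] at hw hw'
          exact Subtype.ext (Prod.ext (hw.trans hw'.symm) he)
        · intro y hy
          simp only [Set.mem_preimage, Set.mem_singleton_iff] at hy
          exact ⟨⟨(x₀, y), hy.symm⟩, rfl, rfl⟩
      · intro w hw
        simp only [Set.mem_preimage, Set.mem_singleton_iff] at hw
        simp [glue, hw]
    have hfs : ∑ᶠ y ∈ g ⁻¹' {f x₀}, p x₀ * q y / pushforward f p (f x₀)
        = ∑ y ∈ hqS.toFinset.filter (fun y => g y = f x₀),
            p x₀ * q y / pushforward f p (f x₀) := by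
      apply finsum_mem_eq_sum_of_inter_support_eq
      ext y
      have hne : (fun y => p x₀ * q y / pushforward f p (f x₀)) y ≠ 0 → q y ≠ 0 := by
        intro hyy hqy
        exact hyy (by simp [hqy])
      simp only [Set.mem_inter_iff, Set.mem_preimage, Set.mem_singleton_iff, Finset.coe_filter,
        Set.mem_setOf_eq, Set.Finite.mem_toFinset, Function.mem_support]
      tauto
    have hsum : ∑ y ∈ hqS.toFinset.filter (fun y => g y = f x₀),
        p x₀ * q y / pushforward f p (f x₀)
        = p x₀ * pushforward f p (f x₀) / pushforward f p (f x₀) := by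
      simp only [div_eq_mul_inv, ← Finset.sum_mul, ← Finset.mul_sum]
      rw [← pushforward_eq_sum g q hqS (f x₀), ← h]
    rw [hbij, hfs, hsum]
    by_cases hc : pushforward f p (f x₀) = 0
    · rw [hc, pushforward_eq_zero f p hpS hp0 hc]; simp
    · rw [mul_div_assoc, div_self hc, mul_one]
  -- second marginal
  have hm2 : pushforward (fun w : {w : X × Y // f w.1 = g w.2} => w.1.2) (glue f g p q) = q := by
    funext y₀
    have hbij : pushforward (fun w : {w : X × Y // f w.1 = g w.2} => w.1.2) (glue f g p q) y₀
        = ∑ᶠ x ∈ f ⁻¹' {g y₀}, p x * q y₀ / pushforward f p (g y₀) := by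
      apply finsum_mem_eq_of_bijOn (fun w => w.1.1)
      · refine ⟨?_, ?_, ?_⟩
        · intro w hw
          simp only [Set.mem_preimage, Set.mem_singleton_iff] at hw ⊢
          rw [w.2, hw]
        · intro w hw w' hw' he
          simp only [Set.mem_preimage, Set.mem_singleton_iff] at hw hw'
          exact Subtype.ext (Prod.ext he (hw.trans hw'.symm))
        · intro x hx
          simp only [Set.mem_preimage, Set.mem_singleton_iff] at hx
          exact ⟨⟨(x, y₀), hx⟩, rfl, rfl⟩
      · intro w hw
        simp only [Set.mem_preimage, Set.mem_singleton_iff] at hw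
        have : f w.1.1 = g y₀ := by rw [w.2, hw]
        simp [glue, hw, this]
    have hfs : ∑ᶠ x ∈ f ⁻¹' {g y₀}, p x * q y₀ / pushforward f p (g y₀)
        = ∑ x ∈ hpS.toFinset.filter (fun x => f x = g y₀),
            p x * q y₀ / pushforward f p (g y₀) := by
      apply finsum_mem_eq_sum_of_inter_support_eq
      ext x
      have hne : (fun x => p x * q y₀ / pushforward f p (g y₀)) x ≠ 0 → p x ≠ 0 := by
        intro hxx hpx
        exact hxx (by simp [hpx])
      simp only [Set.mem_inter_iff, Set.mem_preimage, Set.mem_singleton_iff, Finset.coe_filter,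
        Set.mem_setOf_eq, Set.Finite.mem_toFinset, Function.mem_support]
      tauto
    have hsum : ∑ x ∈ hpS.toFinset.filter (fun x => f x = g y₀),
        p x * q y₀ / pushforward f p (g y₀)
        = pushforward f p (g y₀) * q y₀ / pushforward f p (g y₀) := by
      simp only [div_eq_mul_inv, ← Finset.sum_mul]
      rw [← pushforward_eq_sum f p hpS (g y₀)]
    rw [hbij, hfs, hsum]
    by_cases hc : pushforward f p (g y₀) = 0
    · have hq0' : pushforward g q (g y₀) = 0 := by rw [← h]; exact hc
      rw [hc, pushforward_eq_zero g q hqS hq0 hq0']; simp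
    · rw [mul_div_assoc, mul_comm]; exact div_mul_cancel₀ (q y₀) hc
  -- total mass
  have htot : ∑ᶠ w, glue f g p q w = 1 := by
    have hfib := finsum_fiberwise' (fun w : {w : X × Y // f w.1 = g w.2} => w.1.1)
      (glue f g p q) hGfin
    rw [hm1] at hfib
    rw [← hfib, hp1]
  exact ⟨⟨hg0, hGfin, htot⟩, hm1, hm2⟩
end

section
/- Naturality of the gluing operation with injective base change: given a commutative diagram of sets with f : X → Z, g : Y → Z, α : X → X', β : Y → Y', γ : Z → Z' injective, f' : X' → Z', g' : Y' → Z' satisfying f' ∘ α = γ ∘ f and g' ∘ β = γ ∘ g, then for all (p,q) ∈ D(X) ×_{D(Z)} D(Y): D(α × β)(m_{f,g}(p,q)) = m_{f',g'}(D(α)(p), D(β)(q)). -/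
open scoped BigOperators
open Function

lemma pushforward_apply {X Y : Type} (f : X → Y) (p : X → ℝ) {s : Finset X}
    (hs : Function.support p ⊆ ↑s) (y : Y) [DecidablePred fun x => f x = y] :
    pushforward f p y = ∑ x ∈ s.filter (fun x => f x = y), p x := by
  refine finsum_mem_eq_sum_of_subset _ ?_ ?_
  · intro x hx
    simp only [Finset.coe_filter, Set.mem_setOf_eq]
    exact ⟨hs hx.2, hx.1⟩
  · intro x hx
    simp only [Finset.coe_filter, Set.mem_setOf_eq] at hx
    exact hx.2

lemma pushforward_comp {X Y Z : Type} (f : X → Y) (g : Y → Z) (p : X → ℝ)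
    (hp : (Function.support p).Finite) (z : Z) :
    pushforward g (pushforward f p) z = pushforward (fun x => g (f x)) p z := by
  classical
  have hsupp : Function.support (pushforward f p) ⊆ ↑(hp.toFinset.image f) := by
    intro y hy
    rw [Function.mem_support] at hy
    by_contra hmem
    apply hy
    apply finsum_mem_of_eqOn_zero
    intro x hx
    by_contra hpx
    exact hmem (Finset.mem_coe.2 (Finset.mem_image.2 ⟨x, hp.mem_toFinset.2 hpx, hx⟩))
  rw [pushforward_apply g _ hsupp z, pushforward_apply (fun x => g (f x)) p
      (by simp : Function.support p ⊆ ↑hp.toFinset) z]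
  rw [← Finset.sum_fiberwise_of_maps_to (g := f)
    (s := hp.toFinset.filter (fun x => g (f x) = z))
    (t := (hp.toFinset.image f).filter (fun y => g y = z))
    (by
      intro x hx
      simp only [Finset.mem_filter, Finset.mem_image] at hx ⊢
      exact ⟨⟨x, hx.1, rfl⟩, hx.2⟩)]
  refine Finset.sum_congr rfl ?_
  intro y hy
  simp only [Finset.mem_filter] at hy
  rw [pushforward_apply f p (by simp : Function.support p ⊆ ↑hp.toFinset) y]
  refine Finset.sum_congr ?_ (fun _ _ => rfl)
  ext x
  simp only [Finset.mem_filter, Finset.filter_filter]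
  exact ⟨fun h => ⟨h.1, by rw [h.2]; exact hy.2, h.2⟩, fun h => ⟨h.1, h.2.2⟩⟩

/-- naturality of the gluing operation with injective base change `γ`:
`D(α × β)(m_{f,g}(p,q)) = m_{f',g'}(D(α)(p), D(β)(q))` for `(p,q) ∈ D(X) ×_{D(Z)} D(Y)`. -/
theorem glue_natural {X Y Z X' Y' Z' : Type}
    (f : X → Z) (g : Y → Z) (f' : X' → Z') (g' : Y' → Z')
    (α : X → X') (β : Y → Y') (γ : Z → Z')
    (hα : ∀ x, f' (α x) = γ (f x)) (hβ : ∀ y, g' (β y) = γ (g y))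
    (hγ : Function.Injective γ)
    (p : X → ℝ) (q : Y → ℝ) (hp : IsDist p) (hq : IsDist q)
    (hpq : pushforward f p = pushforward g q) :
    pushforward
      (fun w : {w : X × Y // f w.1 = g w.2} =>
        (⟨(α w.1.1, β w.1.2), by rw [hα, hβ, w.2]⟩ :
          {w : X' × Y' // f' w.1 = g' w.2}))
      (glue f g p q)
    = glue f' g' (pushforward α p) (pushforward β q) := by
  classical
  obtain ⟨hp0, hpfin, -⟩ := hp
  obtain ⟨hq0, hqfin, -⟩ := hq
  set sp := hpfin.toFinset with hsp
  set sq := hqfin.toFinset with hsq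
  funext w'
  obtain ⟨⟨x', y'⟩, hw'⟩ := w'
  -- the subtype finset covering the support of glue
  set T : Finset {w : X × Y // f w.1 = g w.2} :=
    (sp ×ˢ sq).subtype (fun w => f w.1 = g w.2) with hT
  have hTsupp : Function.support (glue f g p q) ⊆ ↑T := by
    intro w hw
    rw [Function.mem_support] at hw
    have hx : p w.1.1 ≠ 0 := fun h => hw (by simp [glue, h])
    have hy : q w.1.2 ≠ 0 := fun h => hw (by simp [glue, h])
    simp only [hT, Finset.mem_coe, Finset.mem_subtype, Finset.mem_product]
    exact ⟨hpfin.mem_toFinset.2 hx, hqfin.mem_toFinset.2 hy⟩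
  have hLHS : pushforward
      (fun w : {w : X × Y // f w.1 = g w.2} =>
        (⟨(α w.1.1, β w.1.2), by rw [hα, hβ, w.2]⟩ :
          {w : X' × Y' // f' w.1 = g' w.2}))
      (glue f g p q) ⟨(x', y'), hw'⟩
      = ∑ w ∈ T.filter (fun w => α w.1.1 = x' ∧ β w.1.2 = y'), glue f g p q w := by
    rw [pushforward_apply _ _ hTsupp]
    refine Finset.sum_congr ?_ (fun _ _ => rfl)
    apply Finset.filter_congr
    intro w _
    simp [Subtype.ext_iff, Prod.ext_iff]
  -- RHS pieces
  have hA : pushforward α p x' = ∑ x ∈ sp.filter (fun x => α x = x'), p x :=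
    pushforward_apply α p (by simp [hsp]) x'
  have hB : pushforward β q y' = ∑ y ∈ sq.filter (fun y => β y = y'), q y :=
    pushforward_apply β q (by simp [hsq]) y'
  have hRHS : glue f' g' (pushforward α p) (pushforward β q) ⟨(x', y'), hw'⟩
      = pushforward α p x' * pushforward β q y' /
        pushforward (fun x => f' (α x)) p (f' x') := by
    simp only [glue]
    rw [pushforward_comp α f' p hpfin]
  by_cases hA0 : pushforward α p x' = 0
  · -- all p vanish on the fiber, both sides are zero
    rw [hLHS, hRHS, hA0, zero_mul, zero_div]
    apply Finset.sum_eq_zero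
    intro w hw
    simp only [Finset.mem_filter, hT, Finset.mem_subtype, Finset.mem_product] at hw
    have hx0 : p w.1.1 = 0 := by
      have := (Finset.sum_eq_zero_iff_of_nonneg
        (fun x _ => hp0 x)).1 (hA ▸ hA0) w.1.1
        (Finset.mem_filter.2 ⟨hw.1.1, hw.2.1⟩)
      exact this
    simp [glue, hx0]
  · -- there is x0 in the fiber with p x0 ≠ 0, set z0 := f x0
    obtain ⟨x0, hx0mem, hx0⟩ := Finset.exists_ne_zero_of_sum_ne_zero (hA ▸ hA0)
    have hαx0 : α x0 = x' := (Finset.mem_filter.1 hx0mem).2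
    set z0 := f x0 with hz0
    have hγz0 : γ z0 = f' x' := by rw [← hαx0, hα]
    -- the denominators agree
    have hden : pushforward (fun x => f' (α x)) p (f' x') = pushforward f p z0 := by
      simp only [pushforward]
      apply finsum_mem_congr _ (fun _ _ => rfl)
      ext x
      simp only [Set.mem_preimage, Set.mem_singleton_iff, hα, ← hγz0]
      exact ⟨fun h => hγ h, fun h => by rw [h]⟩
    -- on the fiber, all f-values are z0
    have hfz : ∀ w ∈ T.filter (fun w : {w : X × Y // f w.1 = g w.2} =>
        α w.1.1 = x' ∧ β w.1.2 = y'), f w.1.1 = z0 := by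
      intro w hw
      obtain ⟨-, hwx, -⟩ := Finset.mem_filter.1 hw
      apply hγ
      rw [← hα, hwx, hγz0]
    rw [hLHS, hRHS, hden]
    have : ∑ w ∈ T.filter (fun w => α w.1.1 = x' ∧ β w.1.2 = y'), glue f g p q w
        = (∑ w ∈ T.filter (fun w => α w.1.1 = x' ∧ β w.1.2 = y'),
            p w.1.1 * q w.1.2) / pushforward f p z0 := by
      rw [Finset.sum_div]
      refine Finset.sum_congr rfl ?_
      intro w hw
      simp only [glue, hfz w hw]
    rw [this]
    congr 1
    -- now the bijection with the product of fibers
    rw [hA, hB, Finset.sum_mul_sum, ← Finset.sum_product']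
    have hfg : ∀ v : X × Y, α v.1 = x' → β v.2 = y' → f v.1 = g v.2 := by
      intro v h1 h2
      apply hγ
      rw [← hα, ← hβ, h1, h2, hw']
    refine Finset.sum_bij' (fun w _ => w.1)
      (fun v hv => ⟨v, by
        obtain ⟨h1, h2⟩ := Finset.mem_product.1 hv
        exact hfg v (Finset.mem_filter.1 h1).2 (Finset.mem_filter.1 h2).2⟩)
      ?_ ?_ ?_ ?_ ?_
    · intro w hw
      simp only [Finset.mem_filter, hT, Finset.mem_subtype, Finset.mem_product] at hw
      exact Finset.mem_product.2 ⟨Finset.mem_filter.2 ⟨hw.1.1, hw.2.1⟩,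
        Finset.mem_filter.2 ⟨hw.1.2, hw.2.2⟩⟩
    · intro v hv
      obtain ⟨h1, h2⟩ := Finset.mem_product.1 hv
      obtain ⟨h1a, h1b⟩ := Finset.mem_filter.1 h1
      obtain ⟨h2a, h2b⟩ := Finset.mem_filter.1 h2
      refine Finset.mem_filter.2 ⟨?_, h1b, h2b⟩
      simp only [hT, Finset.mem_subtype]
      exact Finset.mem_product.2 ⟨h1a, h2a⟩
    · intro w hw
      rfl
    · intro v hv
      rfl
    · intro w hw
      rfl
end

section
/- Back-and-forth property of the distribution-monad gluing: given maps E → X, Y → X, and π : Z → Y (yielding Z → X by composition), for any p ∈ D(E) and q ∈ D(Z) whose pushforwards to D(X) agree, one has m(m(p, D(π)(q)), q) = m(p, q), where the left side glues p first with the pushforward of q to Y and then with q itself. -/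
open scoped BigOperators

/-! Over a point `y`, the inner gluing `m(p, Q)` has total mass `C * (Q y / C)` with
`C = D(e)(p)(u y)`, i.e. `Q y` unless `C = 0`. Hence the outer gluing divides by that mass, and
the factor `Q y = D(π)(q)(π z)` cancels; when it vanishes, so does `q z` (as `0 ≤ q z ≤ Q y`),
and both sides are `0`. -/

lemma le_pushforward_apply {X Y : Type} (f : X → Y) {p : X → ℝ}
    (hp₀ : ∀ x, 0 ≤ p x) (hp : (Function.support p).Finite) (x : X) :
    p x ≤ pushforward f p (f x) := by
  have hx : x ∈ f ⁻¹' {f x} := rfl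
  calc p x = (f ⁻¹' {f x}).indicator p x := (Set.indicator_of_mem hx p).symm
    _ ≤ ∑ᶠ x', (f ⁻¹' {f x}).indicator p x' :=
      single_le_finsum x ((hp.inter_of_right _).subset Set.support_indicator.subset)
        (Set.indicator_nonneg fun x' _ => hp₀ x')
    _ = pushforward f p (f x) := (finsum_mem_def _ _).symm

lemma bijOn_fst_fiber_snd {E X Y : Type} (e : E → X) (u : Y → X) (y : Y) :
    Set.BijOn (fun w : {w : E × Y // e w.1 = u w.2} => w.1.1)
      ((fun w : {w : E × Y // e w.1 = u w.2} => w.1.2) ⁻¹' {y}) (e ⁻¹' {u y}) := by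
  refine ⟨?_, ?_, fun a ha => ⟨⟨(a, y), ha⟩, rfl, rfl⟩⟩
  · rintro ⟨⟨a, y'⟩, h⟩ (rfl : y' = y)
    exact h
  · rintro ⟨⟨a, y'⟩, h⟩ (rfl : y' = y) ⟨⟨a', y''⟩, h'⟩ (rfl : y'' = y') (rfl : a = a')
    rfl

lemma pushforward_snd_glue {E X Y : Type} (e : E → X) (u : Y → X)
    (p : E → ℝ) (Q : Y → ℝ) (y : Y) :
    pushforward (fun w : {w : E × Y // e w.1 = u w.2} => w.1.2) (glue e u p Q) y
      = pushforward e p (u y) * (Q y / pushforward e p (u y)) := by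
  change ∑ᶠ w ∈ _, glue e u p Q w = (∑ᶠ a ∈ e ⁻¹' {u y}, p a) * _
  rw [finsum_mem_mul, finsum_mem_eq_of_bijOn _ (bijOn_fst_fiber_snd e u y)]
  rintro ⟨⟨a, y'⟩, h⟩ (rfl : y' = y)
  simp only [glue, h, mul_div_assoc]

lemma mul_div_mul_div_div_eq {K : Type} [Field K] (x r Q C : K) (hr : Q = 0 → r = 0) :
    x * Q / C * r / (C * (Q / C)) = x * r / C := by
  rcases eq_or_ne C 0 with rfl | hC
  · simp
  rcases eq_or_ne Q 0 with rfl | hQ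
  · simp [hr rfl]
  field_simp

theorem glue_back_and_forth_general {E X Y Z : Type}
    (e : E → X) (u : Y → X) (π : Z → Y)
    (p : E → ℝ) (q : Z → ℝ) (hq : IsDist q) :
    ∀ (a : E) (z : Z) (h1 : e a = u (π z)),
      glue (fun w : {w : E × Y // e w.1 = u w.2} => w.1.2) π
          (glue e u p (pushforward π q)) q
        ⟨(⟨(a, π z), h1⟩, z), rfl⟩
      = glue e (u ∘ π) p q ⟨(a, z), h1⟩ := by
  intro a z h1
  have hqz : pushforward π q (π z) = 0 → q z = 0 := fun h =>
    le_antisymm (h ▸ le_pushforward_apply π hq.1 hq.2.1 z) (hq.1 z)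
  simp only [glue, pushforward_snd_glue, h1]
  exact mul_div_mul_div_div_eq _ _ _ _ hqz

/-- the back-and-forth property of the distribution-monad gluing.
Given `e : E → X`, `u : Y → X`, `π : Z → Y`, distributions `p ∈ D(E)`, `q ∈ D(Z)` whose
pushforwards to `X` agree, the iterated gluing `m(m(p, D(π)(q)), q)` coincides with the
direct gluing `m(p, q)` under the canonical identification `(E ×_X Y) ×_Y Z ≅ E ×_X Z`. -/
theorem glue_back_and_forth {E X Y Z : Type}
    (e : E → X) (u : Y → X) (π : Z → Y)
    (p : E → ℝ) (q : Z → ℝ) (hp : IsDist p) (hq : IsDist q)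
    (hpq : pushforward e p = pushforward (u ∘ π) q) :
    ∀ (a : E) (z : Z) (h1 : e a = u (π z)),
      glue (fun w : {w : E × Y // e w.1 = u w.2} => w.1.2) π
          (glue e u p (pushforward π q)) q
        ⟨(⟨(a, π z), h1⟩, z), rfl⟩
      = glue e (u ∘ π) p q ⟨(a, z), h1⟩ :=
  glue_back_and_forth_general e u π p q hq
end

section
/- Gluing with deterministics is natural: for maps f : X → Z, g : Y → Z, define η_{f,g} : D(X) ×_{D(Z)} Y → D(X ×_Z Y) by η(p, ỹ)(x,y) = p(x)·δ^{ỹ}(y) (the composite of (id, δ_Y) with the gluing m). Then for any commutative squares f' ∘ α = γ ∘ f and g' ∘ β = γ ∘ g (with γ : Z → Z' not necessarily injective), one has D(α × β) ∘ η_{f,g} = η_{f',g'} ∘ (D(α) × β) on D(X) ×_{D(Z)} Y. -/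
open scoped BigOperators Classical

noncomputable def dirac {X : Type} (x : X) : X → ℝ :=
  fun x' => if x' = x then 1 else 0

/-- Gluing with deterministics: `η_{f,g}(p, ỹ)(x,y) = p(x) · δ^{ỹ}(y)` on the pullback. -/
noncomputable def etaGlue {X Y Z : Type} (f : X → Z) (g : Y → Z)
    (p : X → ℝ) (ytil : Y) : {w : X × Y // f w.1 = g w.2} → ℝ :=
  fun w => p w.1.1 * dirac ytil w.1.2

lemma supp_lemma {X Y Z : Type} (f : X → Z) (g : Y → Z)
    (p : X → ℝ) (ytil : Y) (hp : IsDist p)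
    (hmatch : pushforward f p = dirac (g ytil)) :
    ∀ x, p x ≠ 0 → f x = g ytil := by
  intro x hx
  by_contra hfx
  have h0 : pushforward f p (f x) = 0 := by
    rw [hmatch]; simp [dirac, hfx]
  have hfin : (f ⁻¹' {f x} ∩ Function.support p).Finite :=
    hp.2.1.subset Set.inter_subset_right
  rw [pushforward, finsum_mem_eq_sum _ hfin] at h0
  have hmem : x ∈ hfin.toFinset := by
    simp [Set.Finite.mem_toFinset, hx]
  have := (Finset.sum_eq_zero_iff_of_nonneg (fun y _ => hp.1 y)).mp h0 x hmem
  exact hx this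

/-- naturality of gluing with deterministics (no injectivity of `γ` required):
`D(α × β) ∘ η_{f,g} = η_{f',g'} ∘ (D(α) × β)` on `D(X) ×_{D(Z)} Y`. -/
theorem etaGlue_natural {X Y Z X' Y' Z' : Type}
    (f : X → Z) (g : Y → Z) (f' : X' → Z') (g' : Y' → Z')
    (α : X → X') (β : Y → Y') (γ : Z → Z')
    (hα : ∀ x, f' (α x) = γ (f x)) (hβ : ∀ y, g' (β y) = γ (g y))
    (p : X → ℝ) (ytil : Y) (hp : IsDist p)
    (hmatch : pushforward f p = dirac (g ytil)) :
    pushforward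
      (fun w : {w : X × Y // f w.1 = g w.2} =>
        (⟨(α w.1.1, β w.1.2), by rw [hα, hβ, w.2]⟩ :
          {w : X' × Y' // f' w.1 = g' w.2}))
      (etaGlue f g p ytil)
    = etaGlue f' g' (pushforward α p) (β ytil) := by
  have hsupp := supp_lemma f g p ytil hp hmatch
  funext w'
  set F := etaGlue f g p ytil with hF
  set S : Set {w : X × Y // f w.1 = g w.2} :=
    (fun w : {w : X × Y // f w.1 = g w.2} =>
        (⟨(α w.1.1, β w.1.2), by rw [hα, hβ, w.2]⟩ :
          {w : X' × Y' // f' w.1 = g' w.2})) ⁻¹' {w'} with hS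
  have hmemS : ∀ w : {w : X × Y // f w.1 = g w.2},
      w ∈ S ↔ α w.1.1 = w'.1.1 ∧ β w.1.2 = w'.1.2 := by
    intro w
    simp only [hS, Set.mem_preimage, Set.mem_singleton_iff, Subtype.ext_iff, Prod.ext_iff]
  by_cases hy : w'.1.2 = β ytil
  · -- main case
    have hRHS : etaGlue f' g' (pushforward α p) (β ytil) w'
        = ∑ᶠ x ∈ α ⁻¹' {w'.1.1}, p x := by
      simp [etaGlue, dirac, hy, pushforward]
    rw [hRHS]
    show ∑ᶠ w ∈ S, F w = _
    have hfin2 : (α ⁻¹' {w'.1.1} ∩ Function.support p).Finite :=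
      hp.2.1.subset Set.inter_subset_right
    have hsubF : ∀ w ∈ S ∩ Function.support F, w.1.2 = ytil ∧ p w.1.1 ≠ 0 := by
      intro w hw
      have h2 := hw.2
      simp only [hF, etaGlue, Function.mem_support, dirac, mul_ne_zero_iff] at h2
      refine ⟨?_, h2.1⟩
      by_contra hne
      simp [hne] at h2
    have hfin1 : (S ∩ Function.support F).Finite := by
      apply Set.Finite.of_finite_image (f := fun w => w.1.1)
      · apply hp.2.1.subset
        rintro x ⟨w, hw, rfl⟩
        exact (hsubF w hw).2
      · intro w hw w2 hw2 he
        have h1 := (hsubF w hw).1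
        have h2 := (hsubF w2 hw2).1
        apply Subtype.ext
        apply Prod.ext he
        rw [h1, h2]
    rw [finsum_mem_eq_sum _ hfin1, finsum_mem_eq_sum _ hfin2]
    refine Finset.sum_bij' (fun w _ => w.1.1)
      (fun x hx => ⟨(x, ytil), by
        apply hsupp
        simp only [Set.Finite.mem_toFinset, Set.mem_inter_iff, Function.mem_support] at hx
        exact hx.2⟩) ?_ ?_ ?_ ?_ ?_
    · intro w hw
      simp only [Set.Finite.mem_toFinset, Set.mem_inter_iff] at hw ⊢
      refine ⟨?_, (hsubF w (by simpa using hw)).2⟩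
      exact ((hmemS w).mp hw.1).1
    · intro x hx
      simp only [Set.Finite.mem_toFinset, Set.mem_inter_iff, Set.mem_preimage,
        Set.mem_singleton_iff, Function.mem_support] at hx ⊢
      constructor
      · rw [hmemS]
        exact ⟨hx.1, hy.symm⟩
      · simp [hF, etaGlue, dirac, hx.2]
    · intro w hw
      have h1 := (hsubF w (by simpa using hw)).1
      apply Subtype.ext
      exact Prod.ext rfl h1.symm
    · intro x hx; rfl
    · intro w hw
      have h1 := (hsubF w (by simpa using hw)).1
      simp [hF, etaGlue, dirac, h1]
  · -- off-diagonal case: both sides zero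
    have hRHS : etaGlue f' g' (pushforward α p) (β ytil) w' = 0 := by
      simp [etaGlue, dirac, hy]
    rw [hRHS]
    show ∑ᶠ w ∈ S, F w = 0
    apply finsum_mem_eq_zero_of_forall_eq_zero
    intro w hw
    have h2 := ((hmemS w).mp hw).2
    have : w.1.2 ≠ ytil := by
      intro h; apply hy; rw [← h2, h]
    simp [hF, etaGlue, dirac, this]
end

section
/- If f : Γ → Σ is a simplicial complex map that is discrete over vertices (distinct vertices x ≠ y of Γ with f(x) = f(y) never span an edge) and locally surjective (for each γ ∈ Γ, f restricted to the star of γ surjects onto the star of f(γ)), then for every simplex {τ₁,…,τ_n} of N̂Σ, the map sending a simplex {γ₁,…,γ_k} in (N̂f)⁻¹({τ₁,…,τ_n}) to the union γ₁ ∪ ⋯ ∪ γ_k is a bijection from (N̂f)⁻¹({τ₁,…,τ_n}) to f⁻¹(τ₁ ∪ ⋯ ∪ τ_n). -/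
/-- An (abstract) simplicial complex on the vertex set `V`: a collection of nonempty
finite subsets of `V` containing all singletons and closed under nonempty subsets. -/
structure SC (V : Type) where
  faces : Set (Finset V)
  singleton_mem : ∀ x : V, {x} ∈ faces
  nonempty_of_mem : ∀ {σ : Finset V}, σ ∈ faces → σ.Nonempty
  down_closed : ∀ {σ τ : Finset V}, σ ∈ faces → τ ⊆ σ → τ.Nonempty → τ ∈ faces

/-- A simplicial complex map: a vertex map sending simplices to simplices. -/
def SC.IsMap {V W : Type} [DecidableEq W] (K : SC V) (L : SC W) (φ : V → W) : Prop :=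
  ∀ σ ∈ K.faces, σ.image φ ∈ L.faces

/-- The simplices of `K`, i.e. the vertices of the nerve complex. -/
abbrev SC.Vert {V : Type} (K : SC V) := {σ : Finset V // σ ∈ K.faces}

/-- The set of simplices of the nerve complex `N̂K`: finite nonempty families of
simplices of `K` whose union is a simplex of `K`. -/
def nerveFaces {V : Type} [DecidableEq V] (K : SC V) : Set (Finset K.Vert) :=
  {S | S.Nonempty ∧ S.sup Subtype.val ∈ K.faces}

/-- The nerve complex `N̂K`. -/
def nerve {V : Type} [DecidableEq V] (K : SC V) : SC K.Vert where
  faces := nerveFaces K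
  singleton_mem := fun σ => ⟨Finset.singleton_nonempty σ, by simpa using σ.property⟩
  nonempty_of_mem := fun h => h.1
  down_closed := by
    intro S T hS hTS hT
    refine ⟨hT, K.down_closed hS.2 (Finset.sup_mono hTS) ?_⟩
    obtain ⟨σ, hσ⟩ := hT
    obtain ⟨x, hx⟩ := K.nonempty_of_mem σ.property
    exact ⟨x, Finset.mem_of_subset (Finset.le_sup hσ) hx⟩

/-- The map `N̂φ` induced on nerve vertices by a simplicial complex map `φ`. -/
def nerveMap {V W : Type} [DecidableEq V] [DecidableEq W] {K : SC V} {L : SC W}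
    (φ : V → W) (hφ : K.IsMap L φ) : K.Vert → L.Vert :=
  fun σ => ⟨σ.val.image φ, hφ _ σ.property⟩

/-- for a simplicial complex map `φ : Γ → Σ` that is discrete over vertices
and locally surjective, and any simplex `T` of `N̂Σ`, taking unions is a bijection from
`(N̂φ)⁻¹(T)` onto `φ⁻¹(∪T)`. -/
theorem nerve_fiber_bijection {V W : Type} [DecidableEq V] [DecidableEq W]
    (Γ : SC V) (L : SC W) (φ : V → W) (hφ : Γ.IsMap L φ)
    (hdisc : ∀ x y : V, x ≠ y → φ x = φ y → ({x, y} : Finset V) ∉ Γ.faces)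
    (hloc : ∀ γ ∈ Γ.faces, ∀ σ ∈ L.faces, γ.image φ ⊆ σ →
      ∃ γ' ∈ Γ.faces, γ ⊆ γ' ∧ γ'.image φ = σ)
    (T : Finset L.Vert) (hT : T ∈ (nerve L).faces) :
    Set.BijOn (fun B : Finset Γ.Vert => B.sup Subtype.val)
      {B | B ∈ (nerve Γ).faces ∧ B.image (nerveMap φ hφ) = T}
      {γ | γ ∈ Γ.faces ∧ γ.image φ = T.sup Subtype.val} := by
  classical
  -- φ is injective on each face of Γ
  have hinj : ∀ γ ∈ Γ.faces, ∀ x ∈ γ, ∀ y ∈ γ, φ x = φ y → x = y := by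
    intro γ hγ x hx y hy hxy
    by_contra hne
    refine hdisc x y hne hxy (Γ.down_closed hγ ?_ ⟨x, by simp⟩)
    intro v hv
    rcases Finset.mem_insert.1 hv with rfl | hv
    · exact hx
    · rcases Finset.mem_singleton.1 hv with rfl; exact hy
  -- image of a sup
  have himg : ∀ B : Finset Γ.Vert,
      (B.sup Subtype.val).image φ = (B.image (nerveMap φ hφ)).sup Subtype.val := by
    intro B
    ext w
    simp only [Finset.mem_image, Finset.mem_sup, nerveMap]
    constructor
    · rintro ⟨v, ⟨σ, hσ, hv⟩, rfl⟩
      exact ⟨⟨σ.val.image φ, hφ _ σ.property⟩, ⟨σ, hσ, rfl⟩, Finset.mem_image_of_mem φ hv⟩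
    · rintro ⟨τ, ⟨σ, hσ, rfl⟩, hw⟩
      rcases Finset.mem_image.1 hw with ⟨v, hv, rfl⟩
      exact ⟨v, ⟨σ, hσ, hv⟩, rfl⟩
  -- key: a member of a fiber is determined by its φ-image and the union
  have hkey : ∀ B : Finset Γ.Vert, B ∈ (nerve Γ).faces → ∀ σ ∈ B,
      σ.val = (B.sup Subtype.val).filter (fun v => φ v ∈ σ.val.image φ) := by
    intro B hB σ hσ
    ext v
    simp only [Finset.mem_filter]
    constructor
    · intro hv
      exact ⟨Finset.mem_of_subset (Finset.le_sup hσ) hv, Finset.mem_image_of_mem φ hv⟩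
    · rintro ⟨hvγ, hvim⟩
      rcases Finset.mem_image.1 hvim with ⟨u, hu, huv⟩
      have := hinj _ hB.2 u (Finset.mem_of_subset (Finset.le_sup hσ) hu) v hvγ huv
      exact this ▸ hu
  refine ⟨?_, ?_, ?_⟩
  · rintro B ⟨⟨hBne, hBsup⟩, hBT⟩
    exact ⟨hBsup, by rw [himg B, hBT]⟩
  · rintro B₁ ⟨hB₁, hB₁T⟩ B₂ ⟨hB₂, hB₂T⟩ hsup
    simp only at hsup
    have step : ∀ (B B' : Finset Γ.Vert), B ∈ (nerve Γ).faces → B' ∈ (nerve Γ).faces →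
        B.image (nerveMap φ hφ) = T → B'.image (nerveMap φ hφ) = T →
        B.sup Subtype.val = B'.sup Subtype.val → ∀ σ ∈ B, σ ∈ B' := by
      intro B B' hB hB' hBT hB'T hs σ hσ
      have : nerveMap φ hφ σ ∈ B'.image (nerveMap φ hφ) := by
        rw [hB'T, ← hBT]; exact Finset.mem_image_of_mem _ hσ
      rcases Finset.mem_image.1 this with ⟨σ', hσ', hmap⟩
      have himeq : σ'.val.image φ = σ.val.image φ := congrArg Subtype.val hmap
      have : σ.val = σ'.val := by
        rw [hkey B hB σ hσ, hkey B' hB' σ' hσ', himeq, hs]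
      rwa [Subtype.ext this]
    refine Finset.ext fun σ => ⟨step B₁ B₂ hB₁ hB₂ hB₁T hB₂T hsup σ,
      step B₂ B₁ hB₂ hB₁ hB₂T hB₁T hsup.symm σ⟩
  · rintro γ ⟨hγ, hγim⟩
    -- each τ ∈ T pulls back to a face of Γ inside γ
    have hsubT : ∀ τ ∈ T, τ.val ⊆ γ.image φ := fun τ hτ => hγim ▸ Finset.le_sup hτ
    have hface : ∀ τ ∈ T, γ.filter (fun v => φ v ∈ τ.val) ∈ Γ.faces := by
      intro τ hτ
      obtain ⟨w, hw⟩ := L.nonempty_of_mem τ.property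
      rcases Finset.mem_image.1 (hsubT τ hτ hw) with ⟨v, hv, rfl⟩
      exact Γ.down_closed hγ (Finset.filter_subset _ _)
        ⟨v, Finset.mem_filter.2 ⟨hv, hw⟩⟩
    have hfim : ∀ τ ∈ T, (γ.filter (fun v => φ v ∈ τ.val)).image φ = τ.val := by
      intro τ hτ
      ext w
      constructor
      · intro hw
        rcases Finset.mem_image.1 hw with ⟨v, hv, rfl⟩
        exact (Finset.mem_filter.1 hv).2
      · intro hw
        rcases Finset.mem_image.1 (hsubT τ hτ hw) with ⟨v, hv, rfl⟩
        exact Finset.mem_image_of_mem φ (Finset.mem_filter.2 ⟨hv, hw⟩)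
    set B : Finset Γ.Vert :=
      T.attach.image (fun τ => ⟨γ.filter (fun v => φ v ∈ τ.val.val), hface τ.val τ.property⟩)
      with hBdef
    have hBsup : B.sup Subtype.val = γ := by
      ext v
      constructor
      · intro hv
        rcases Finset.mem_sup.1 hv with ⟨σ, hσ, hvσ⟩
        rcases Finset.mem_image.1 hσ with ⟨τ, _, rfl⟩
        exact (Finset.mem_filter.1 hvσ).1
      · intro hv
        have : φ v ∈ T.sup Subtype.val := hγim ▸ Finset.mem_image_of_mem φ hv
        rcases Finset.mem_sup.1 this with ⟨τ, hτ, hw⟩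
        exact Finset.mem_sup.2 ⟨_, Finset.mem_image_of_mem _ (Finset.mem_attach T ⟨τ, hτ⟩),
          Finset.mem_filter.2 ⟨hv, hw⟩⟩
    have hBne : B.Nonempty := by
      obtain ⟨τ, hτ⟩ := hT.1
      exact ⟨_, Finset.mem_image_of_mem _ (Finset.mem_attach T ⟨τ, hτ⟩)⟩
    have hBmem : B ∈ (nerve Γ).faces := ⟨hBne, by rw [hBsup]; exact hγ⟩
    have hBT : B.image (nerveMap φ hφ) = T := by
      ext τ
      constructor
      · intro h
        rcases Finset.mem_image.1 h with ⟨σ, hσ, rfl⟩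
        rcases Finset.mem_image.1 hσ with ⟨τ', _, rfl⟩
        have : nerveMap φ hφ ⟨_, hface τ'.val τ'.property⟩ = τ'.val :=
          Subtype.ext (hfim τ'.val τ'.property)
        rw [this]; exact τ'.property
      · intro hτ
        exact Finset.mem_image.2 ⟨⟨_, hface τ hτ⟩,
          Finset.mem_image.2 ⟨⟨τ, hτ⟩, Finset.mem_attach _ _, rfl⟩, Subtype.ext (hfim τ hτ)⟩
    exact ⟨B, ⟨hBmem, hBT⟩, hBsup⟩
end

section
/- Let Σ be a simplicial complex and F : C_Σ^op → Set a local functor (meaning: for every simplex σ and every cover σ₁,…,σ_n of σ by subsimplices with ∪σᵢ = σ, the canonical map F(σ) → lim of F over the diagram of intersections of the σᵢ is injective). Then the category of elements of F forms a simplicial complex Γ_F: its vertices are pairs (x, s) with x a vertex of Σ and s ∈ F(x), its simplices are the sets of vertices {(x₁,s₁),…,(x_n,s_n)} arising from an element (σ, s) with σ = {x₁,…,x_n} ∈ Σ, s ∈ F(σ), sᵢ = s|_{xᵢ}, and each element (σ,s) is uniquely determined by its set of vertices. -/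
open scoped Classical

/-- A functor on the (opposite of the) poset of finite subsets of `V`, modeling a
`Set`-valued functor on `C_Σ^op`. -/
structure PreFunctor (V : Type) where
  obj : Finset V → Type
  map : ∀ {τ σ : Finset V}, τ ⊆ σ → obj σ → obj τ
  map_id : ∀ (σ : Finset V) (s : obj σ), map (Finset.Subset.refl σ) s = s
  map_comp : ∀ {ρ τ σ : Finset V} (h1 : ρ ⊆ τ) (h2 : τ ⊆ σ) (s : obj σ),
    map h1 (map h2 s) = map (h1.trans h2) s

/-- Locality: for every simplex `σ` of `K` and every cover of `σ` by subsimplices,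
the canonical map from `F(σ)` into the limit over the cover diagram is injective,
i.e. sections agreeing on all members of the cover are equal. -/
def IsLocal {V : Type} (K : SC V) (F : PreFunctor V) : Prop :=
  ∀ ⦃σ : Finset V⦄, σ ∈ K.faces →
    ∀ (C : Finset (Finset V)), (∀ τ ∈ C, τ ∈ K.faces) →
      ∀ (hsub : ∀ τ ∈ C, τ ⊆ σ), C.sup id = σ →
        ∀ s t : F.obj σ,
          (∀ τ (hτ : τ ∈ C), F.map (hsub τ hτ) s = F.map (hsub τ hτ) t) → s = t

/-- An event scenario: a local functor with nonempty values and surjective restrictions. -/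
def IsEvent {V : Type} (K : SC V) (F : PreFunctor V) : Prop :=
  IsLocal K F ∧ (∀ σ ∈ K.faces, Nonempty (F.obj σ)) ∧
  (∀ {τ σ : Finset V} (h : τ ⊆ σ), τ ∈ K.faces → σ ∈ K.faces →
    Function.Surjective (F.map h))

/-- The set of vertices of the element `(σ, s)` of the category of elements of `F`:
the pairs `(x, s|_x)` for `x ∈ σ`. -/
noncomputable def elVertices {V : Type} (F : PreFunctor V)
    (σ : Finset V) (s : F.obj σ) : Finset ((x : V) × F.obj ({x} : Finset V)) :=
  σ.attach.image
    (fun x => ⟨x.val, F.map (Finset.singleton_subset_iff.mpr x.property) s⟩)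

/-- The simplices of the category of elements `Γ_F`: vertex sets of elements `(σ, s)`. -/
def elFaces {V : Type} (K : SC V) (F : PreFunctor V) :
    Set (Finset ((x : V) × F.obj ({x} : Finset V))) :=
  {A | ∃ (σ : Finset V) (_ : σ ∈ K.faces) (s : F.obj σ), A = elVertices F σ s}

lemma mem_elVertices {V : Type} (F : PreFunctor V) (σ : Finset V) (s : F.obj σ)
    (p : (x : V) × F.obj ({x} : Finset V)) :
    p ∈ elVertices F σ s ↔ ∃ h : p.1 ∈ σ,
      p.2 = F.map (Finset.singleton_subset_iff.mpr h) s := by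
  simp only [elVertices, Finset.mem_image, Finset.mem_attach, true_and]
  constructor
  · rintro ⟨x, rfl⟩; exact ⟨x.property, rfl⟩
  · rintro ⟨h, hp⟩
    refine ⟨⟨p.1, h⟩, ?_⟩
    obtain ⟨x, u⟩ := p
    simp only at hp
    simp [hp]

lemma elVertices_image_fst {V : Type} (F : PreFunctor V) (σ : Finset V) (s : F.obj σ) :
    (elVertices F σ s).image Sigma.fst = σ := by
  ext x
  simp only [Finset.mem_image]
  constructor
  · rintro ⟨p, hp, rfl⟩; exact ((mem_elVertices F σ s p).mp hp).1
  · intro hx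
    exact ⟨⟨x, F.map (Finset.singleton_subset_iff.mpr hx) s⟩,
      (mem_elVertices F σ s _).mpr ⟨hx, rfl⟩, rfl⟩

/-- for a local functor `F` on `C_Σ`, the category of elements of `F`
forms a simplicial complex `Γ_F`: its simplices are nonempty, downward closed, every
vertex `(x,s)` spans a simplex, and each element `(σ,s)` is uniquely determined by its
set of vertices. -/
theorem elements_form_complex {V : Type} (K : SC V) (F : PreFunctor V)
    (hF : IsLocal K F) :
    (∀ A ∈ elFaces K F, A.Nonempty) ∧
    (∀ A ∈ elFaces K F, ∀ B ⊆ A, B.Nonempty → B ∈ elFaces K F) ∧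
    (∀ (x : V) (s : F.obj ({x} : Finset V)),
      ({⟨x, s⟩} : Finset ((x : V) × F.obj ({x} : Finset V))) ∈ elFaces K F) ∧
    (∀ (σ : Finset V), σ ∈ K.faces → ∀ (τ : Finset V), τ ∈ K.faces →
      ∀ (s : F.obj σ) (t : F.obj τ),
        elVertices F σ s = elVertices F τ t → σ = τ ∧ HEq s t) := by
  refine ⟨?_, ?_, ?_, ?_⟩
  · rintro A ⟨σ, hσ, s, rfl⟩
    obtain ⟨x, hx⟩ := K.nonempty_of_mem hσ
    exact ⟨⟨x, F.map (Finset.singleton_subset_iff.mpr hx) s⟩,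
      (mem_elVertices F σ s _).mpr ⟨hx, rfl⟩⟩
  · rintro A ⟨σ, hσ, s, rfl⟩ B hB hBne
    set τ : Finset V := B.image Sigma.fst with hτ
    have hτσ : τ ⊆ σ := by
      intro x hx
      simp only [hτ, Finset.mem_image] at hx
      obtain ⟨p, hp, rfl⟩ := hx
      exact ((mem_elVertices F σ s p).mp (hB hp)).1
    have hτne : τ.Nonempty := hBne.image _
    have hτK : τ ∈ K.faces := K.down_closed hσ hτσ hτne
    refine ⟨τ, hτK, F.map hτσ s, ?_⟩
    ext p
    rw [mem_elVertices]
    constructor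
    · intro hp
      have h1 := (mem_elVertices F σ s p).mp (hB hp)
      obtain ⟨hx, hu⟩ := h1
      refine ⟨by simp [hτ]; exact ⟨p.2, hp⟩, ?_⟩
      exact hu.trans (F.map_comp _ _ _).symm
    · rintro ⟨h, hp2⟩
      simp only [hτ, Finset.mem_image] at h
      obtain ⟨q, hq, hq1⟩ := h
      have h1 := (mem_elVertices F σ s q).mp (hB hq)
      obtain ⟨hx, hu⟩ := h1
      have : p = q := by
        obtain ⟨x, u⟩ := p; obtain ⟨y, v⟩ := q
        simp only at hq1
        subst hq1
        simp only at hp2 hu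
        simp [hp2, hu, F.map_comp]
      rw [this]; exact hq
  · intro x s
    refine ⟨{x}, K.singleton_mem x, s, ?_⟩
    ext p
    rw [mem_elVertices]
    simp only [Finset.mem_singleton]
    constructor
    · rintro rfl
      exact ⟨rfl, by rw [show (Finset.singleton_subset_iff.mpr (Finset.mem_singleton_self x) : ({x}:Finset V) ⊆ {x}) = Finset.Subset.refl {x} from rfl, F.map_id]⟩
    · rintro ⟨h, hp⟩
      obtain ⟨y, u⟩ := p
      simp only at h
      subst h
      simp only at hp
      simp [hp, show (Finset.singleton_subset_iff.mpr (Finset.mem_singleton_self x) : ({x}:Finset V) ⊆ {x}) = Finset.Subset.refl {x} from rfl, F.map_id]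
  · intro σ hσ τ hτ s t hst
    have hστ : σ = τ := by
      rw [← elVertices_image_fst F σ s, ← elVertices_image_fst F τ t, hst]
    subst hστ
    refine ⟨rfl, heq_of_eq ?_⟩
    apply hF hσ (σ.image (fun x => ({x} : Finset V)))
    · intro ρ hρ
      simp only [Finset.mem_image] at hρ
      obtain ⟨x, _, rfl⟩ := hρ
      exact K.singleton_mem x
    · rw [Finset.sup_image]
      ext x
      simp [Finset.mem_sup]
    · intro ρ hρ
      simp only [Finset.mem_image] at hρ
      obtain ⟨x, hx, rfl⟩ := hρ
      have hmem : (⟨x, F.map (Finset.singleton_subset_iff.mpr hx) s⟩ :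
          (x : V) × F.obj ({x} : Finset V)) ∈ elVertices F σ t := by
        rw [← hst]; exact (mem_elVertices F σ s _).mpr ⟨hx, rfl⟩
      obtain ⟨h, hp⟩ := (mem_elVertices F σ t _).mp hmem
      simp only at hp
      convert hp using 2 <;> simp
    · intro ρ hρ
      simp only [Finset.mem_image] at hρ
      obtain ⟨x, hx, rfl⟩ := hρ
      exact Finset.singleton_subset_iff.mpr hx
end

section
/- Locality is stable under precomposition with simplicial relations: let π : Σ' → N̂Σ be a simplicial complex map, inducing π̄ : C_{Σ'} → C_Σ by π̄(σ) = ∪_{τ ∈ π(σ)} τ. If F : C_Σ^op → Set is local, then F ∘ π̄ : C_{Σ'}^op → Set is local. Moreover, if F is an event scenario (local, with all F(σ) nonempty and all restriction maps surjective), then F ∘ π̄ is an event scenario. -/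
open scoped Classical

/-- `π̄(σ) = ∪_{τ ∈ π(σ)} τ`, for a simplicial relation `π : Σ' → N̂Σ`. -/
noncomputable def barSet {V' V : Type} [DecidableEq V] {K : SC V}
    (π : V' → K.Vert) (σ : Finset V') : Finset V :=
  (σ.image π).sup Subtype.val

lemma barSet_mono {V' V : Type} [DecidableEq V] {K : SC V}
    (π : V' → K.Vert) {τ σ : Finset V'} (h : τ ⊆ σ) :
    barSet π τ ⊆ barSet π σ := by
  intro x hx
  simp only [barSet, Finset.mem_sup] at hx ⊢
  obtain ⟨a, ha, hxa⟩ := hx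
  exact ⟨a, Finset.image_subset_image h ha, hxa⟩

/-- The composite functor `F ∘ π̄ : C_{Σ'}^op → Set`. -/
noncomputable def barFunctor {V' V : Type} [DecidableEq V] {K : SC V}
    (π : V' → K.Vert) (F : PreFunctor V) : PreFunctor V' where
  obj σ := F.obj (barSet π σ)
  map h s := F.map (barSet_mono π h) s
  map_id := fun σ s => F.map_id _ s
  map_comp := fun h1 h2 s => F.map_comp _ _ s

/-- locality is stable under precomposition with a simplicial relation
`π : Σ' → N̂Σ`; moreover, if `F` is an event scenario then so is `F ∘ π̄`. -/
theorem local_stable_precomposition {V' V : Type} [DecidableEq V] [DecidableEq V']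
    (K' : SC V') (K : SC V) (π : V' → K.Vert)
    (hπ : K'.IsMap (nerve K) π) (F : PreFunctor V) :
    (IsLocal K F → IsLocal K' (barFunctor π F)) ∧
    (IsEvent K F → IsEvent K' (barFunctor π F)) := by
  have hface : ∀ {σ : Finset V'}, σ ∈ K'.faces → barSet π σ ∈ K.faces := by
    intro σ hσ
    exact (hπ σ hσ).2
  have hmem : ∀ (σ : Finset V') (x : V), x ∈ barSet π σ ↔ ∃ a ∈ σ, x ∈ (π a).1 := by
    intro σ x
    simp [barSet, Finset.mem_sup, Finset.mem_image]
  have hloc : IsLocal K F → IsLocal K' (barFunctor π F) := by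
    intro hF σ hσ C hCfaces hsub hsup s t hst
    set D : Finset (Finset V) := C.image (barSet π) with hD
    have hDfaces : ∀ τ ∈ D, τ ∈ K.faces := by
      intro τ hτ
      obtain ⟨τ', hτ', rfl⟩ := Finset.mem_image.mp hτ
      exact hface (hCfaces τ' hτ')
    have hDsub : ∀ τ ∈ D, τ ⊆ barSet π σ := by
      intro τ hτ
      obtain ⟨τ', hτ', rfl⟩ := Finset.mem_image.mp hτ
      exact barSet_mono π (hsub τ' hτ')
    refine hF (hface hσ) D hDfaces hDsub ?_ s t ?_
    · have msV : ∀ x : V, x ∈ @Finset.sup (Finset V) (Finset V)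
          (@Lattice.toSemilatticeSup (Finset V)
            (@Finset.instLattice V fun a b => Classical.propDecidable (a = b)))
          Finset.instOrderBot D id ↔ ∃ τ ∈ D, x ∈ τ := fun x =>
        @Finset.mem_sup _ _ (fun a b => Classical.propDecidable (a = b)) _ _ _
      have msV' : ∀ a : V', a ∈ @Finset.sup (Finset V') (Finset V')
          (@Lattice.toSemilatticeSup (Finset V')
            (@Finset.instLattice V' fun a b => Classical.propDecidable (a = b)))
          Finset.instOrderBot C id ↔ ∃ τ ∈ C, a ∈ τ := fun a =>
        @Finset.mem_sup _ _ (fun a b => Classical.propDecidable (a = b)) _ _ _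
      apply Finset.Subset.antisymm
      · intro x hx
        obtain ⟨τ', hτ', hxτ'⟩ := (msV x).mp hx
        exact hDsub τ' hτ' hxτ'
      · intro x hx
        obtain ⟨a, ha, hxa⟩ := (hmem σ x).mp hx
        have ha' : a ∈ σ := ha
        rw [← hsup] at ha'
        obtain ⟨τ', hτ', haτ'⟩ := (msV' a).mp ha'
        have hx' : x ∈ barSet π τ' := (hmem τ' x).mpr ⟨a, haτ', hxa⟩
        exact (msV x).mpr ⟨barSet π τ', Finset.mem_image.mpr ⟨τ', hτ', rfl⟩, hx'⟩
    intro τ hτ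
    obtain ⟨τ', hτ', h⟩ := Finset.mem_image.mp hτ
    subst h
    exact hst τ' hτ'
  refine ⟨hloc, ?_⟩
  rintro ⟨h1, h2, h3⟩
  refine ⟨hloc h1, ?_, ?_⟩
  · intro σ hσ
    exact h2 _ (hface hσ)
  · intro τ σ h hτ hσ
    exact h3 (barSet_mono π h) (hface hτ) (hface hσ)
end

section
/- The inverse-image functor of a bundle scenario is an event scenario: if f : Γ → Σ is a bundle scenario, then the functor S(f) : C_Σ^op → Set defined by S(f)(σ) = f⁻¹(σ) = {γ ∈ Γ : f(γ) = σ}, with restriction map for σ' ⊆ σ sending γ ∈ f⁻¹(σ) to the unique γ' ⊆ γ with f(γ') = σ', satisfies: (i) all values are nonempty, (ii) all restriction maps are surjective, and (iii) S(f) is local. -/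
open scoped Classical

/-- the inverse-image functor `S(f) : σ ↦ f⁻¹(σ)` of a bundle scenario
`f : Γ → Σ` is an event scenario. The restriction map for `σ' ⊆ σ` sends
`γ ∈ f⁻¹(σ)` to the unique `γ' ⊆ γ` with `f(γ') = σ'` (realized as
`γ.filter (p · ∈ σ')`); it exists and is unique, every value `f⁻¹(σ)` is nonempty,
restrictions are surjective, and `S(f)` is local. -/
theorem preimage_functor_is_event {T V : Type} (Γ : SC T) (K : SC V) (p : T → V)
    (hmap : Γ.IsMap K p)
    (hsurj : ∀ σ ∈ K.faces, ∃ γ ∈ Γ.faces, γ.image p = σ)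
    (hloc : ∀ γ ∈ Γ.faces, ∀ σ ∈ K.faces, γ.image p ⊆ σ →
      ∃ γ' ∈ Γ.faces, γ ⊆ γ' ∧ γ'.image p = σ)
    (hdisc : ∀ x y : T, x ≠ y → p x = p y → ({x, y} : Finset T) ∉ Γ.faces) :
    -- the restriction maps are well defined by a unique-existence property,
    -- and are realized by `filter`
    (∀ σ' σ : Finset V, σ' ⊆ σ → σ' ∈ K.faces → σ ∈ K.faces →
      ∀ γ ∈ Γ.faces, γ.image p = σ →
        (∃! γ' : Finset T, γ' ∈ Γ.faces ∧ γ' ⊆ γ ∧ γ'.image p = σ') ∧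
        (γ.filter (fun x => p x ∈ σ') ∈ Γ.faces ∧
          γ.filter (fun x => p x ∈ σ') ⊆ γ ∧
          (γ.filter (fun x => p x ∈ σ')).image p = σ')) ∧
    -- (i) all values of `S(f)` are nonempty
    (∀ σ ∈ K.faces, ∃ γ ∈ Γ.faces, γ.image p = σ) ∧
    -- (ii) all restriction maps of `S(f)` are surjective
    (∀ σ' σ : Finset V, σ' ⊆ σ → σ' ∈ K.faces → σ ∈ K.faces →
      ∀ δ ∈ Γ.faces, δ.image p = σ' →
        ∃ γ ∈ Γ.faces, γ.image p = σ ∧ γ.filter (fun x => p x ∈ σ') = δ) ∧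
    -- (iii) `S(f)` is local
    (∀ σ ∈ K.faces, ∀ C : Finset (Finset V), (∀ τ ∈ C, τ ∈ K.faces) →
      (∀ τ ∈ C, τ ⊆ σ) → C.sup id = σ →
      ∀ γ δ : Finset T, γ ∈ Γ.faces → δ ∈ Γ.faces →
        γ.image p = σ → δ.image p = σ →
        (∀ τ ∈ C, γ.filter (fun x => p x ∈ τ) = δ.filter (fun x => p x ∈ τ)) →
        γ = δ) := by
  -- injectivity of p on faces
  have hinj : ∀ γ ∈ Γ.faces, ∀ x ∈ γ, ∀ y ∈ γ, p x = p y → x = y := by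
    intro γ hγ x hx y hy hpxy
    by_contra hne
    exact hdisc x y hne hpxy (Γ.down_closed hγ
      (by intro z hz; simp at hz; rcases hz with rfl | rfl <;> assumption)
      ⟨x, by simp⟩)
  -- image of filter
  have himg : ∀ γ ∈ Γ.faces, ∀ σ' σ : Finset V, σ' ⊆ σ → γ.image p = σ →
      (γ.filter (fun x => p x ∈ σ')).image p = σ' := by
    intro γ hγ σ' σ hss hγσ
    ext v
    simp only [Finset.mem_image, Finset.mem_filter]
    constructor
    · rintro ⟨x, ⟨_, hv⟩, rfl⟩; exact hv
    · intro hv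
      have : v ∈ γ.image p := hγσ ▸ hss hv
      obtain ⟨x, hx, rfl⟩ := Finset.mem_image.mp this
      exact ⟨x, ⟨hx, hv⟩, rfl⟩
  have hfilt : ∀ σ' σ : Finset V, σ' ⊆ σ → σ' ∈ K.faces →
      ∀ γ ∈ Γ.faces, γ.image p = σ →
      γ.filter (fun x => p x ∈ σ') ∈ Γ.faces ∧
      γ.filter (fun x => p x ∈ σ') ⊆ γ ∧
      (γ.filter (fun x => p x ∈ σ')).image p = σ' := by
    intro σ' σ hss hσ' γ hγ hγσ
    have him := himg γ hγ σ' σ hss hγσ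
    have hne : (γ.filter (fun x => p x ∈ σ')).Nonempty := by
      have := K.nonempty_of_mem hσ'
      obtain ⟨v, hv⟩ := this
      have : v ∈ (γ.filter (fun x => p x ∈ σ')).image p := by rw [him]; exact hv
      obtain ⟨x, hx, _⟩ := Finset.mem_image.mp this
      exact ⟨x, hx⟩
    exact ⟨Γ.down_closed hγ (Finset.filter_subset _ _) hne,
      Finset.filter_subset _ _, him⟩
  -- uniqueness
  have huniq : ∀ σ' σ : Finset V, σ' ⊆ σ →
      ∀ γ ∈ Γ.faces, γ.image p = σ →
      ∀ δ, δ ∈ Γ.faces ∧ δ ⊆ γ ∧ δ.image p = σ' →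
      δ = γ.filter (fun x => p x ∈ σ') := by
    intro σ' σ hss γ hγ hγσ δ ⟨hδ, hδγ, hδσ'⟩
    apply Finset.Subset.antisymm
    · intro x hx
      refine Finset.mem_filter.mpr ⟨hδγ hx, ?_⟩
      exact hδσ' ▸ Finset.mem_image_of_mem p hx
    · intro x hx
      obtain ⟨hxγ, hpx⟩ := Finset.mem_filter.mp hx
      have : p x ∈ δ.image p := hδσ' ▸ hpx
      obtain ⟨y, hy, hpy⟩ := Finset.mem_image.mp this
      have := hinj γ hγ y (hδγ hy) x hxγ hpy
      exact this ▸ hy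
  refine ⟨?_, hsurj, ?_, ?_⟩
  · intro σ' σ hss hσ' hσ γ hγ hγσ
    have hf := hfilt σ' σ hss hσ' γ hγ hγσ
    refine ⟨⟨γ.filter (fun x => p x ∈ σ'), hf, ?_⟩, hf⟩
    intro δ hδ
    exact huniq σ' σ hss γ hγ hγσ δ hδ
  · -- surjectivity
    intro σ' σ hss hσ' hσ δ hδ hδσ'
    obtain ⟨γ, hγ, hδγ, hγσ⟩ := hloc δ hδ σ hσ (hδσ' ▸ hss)
    refine ⟨γ, hγ, hγσ, ?_⟩
    exact (huniq σ' σ hss γ hγ hγσ δ ⟨hδ, hδγ, hδσ'⟩).symm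
  · -- locality
    intro σ hσ C hCf hCσ hCsup γ δ hγ hδ hγσ hδσ hagree
    have key : ∀ γ' δ' : Finset T, γ'.image p = σ → δ'.image p = σ →
        (∀ τ ∈ C, γ'.filter (fun x => p x ∈ τ) = δ'.filter (fun x => p x ∈ τ)) →
        γ' ⊆ δ' := by
      intro γ' δ' hγ' hδ' hag x hx
      have : p x ∈ σ := hγ' ▸ Finset.mem_image_of_mem p hx
      rw [← hCsup] at this
      obtain ⟨τ, hτ, hpx⟩ := Finset.mem_sup.mp this
      have hxf : x ∈ γ'.filter (fun x => p x ∈ τ) :=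
        Finset.mem_filter.mpr ⟨hx, hpx⟩
      rw [hag τ hτ] at hxf
      exact (Finset.mem_filter.mp hxf).1
    exact Finset.Subset.antisymm (key γ δ hγσ hδσ hagree)
      (key δ γ hδσ hγσ fun τ hτ => (hagree τ hτ).symm)
end
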